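/- arXiv:2004.12036 — 6 statements merged into one kernel-verified Lean document; each statement's English description precedes it below -/
import Mathlib

section
/- For real x > 0, one has ∫₀ˣ u/(1+e^u) du = Li₂(1−e^(−x)) − (1/2)·Li₂(1−e^(−2x)), where Li₂(z) = Σ_{n≥1} z^n/n² is the dilogarithm. -/
open Real

/-- The dilogarithm, defined by its Taylor series `Σ_{n ≥ 1} z^n / n²`. -/
noncomputable def Li2 (z : ℝ) : ℝ := ∑' n : ℕ, z ^ (n + 1) / ((n : ℝ) + 1) ^ 2

open Set

/-!
Both sides vanish at `x = 0`, so it suffices to compare derivatives. Inside the unit disc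
`Li2' z = Σ zⁿ/(n+1) = -log (1 - z) / z`, hence for `a * t > 0`
`d/dt Li2 (1 - e^{-a t}) = a² t / (e^{a t} - 1)`. With `a = 1` and `a = 2` the right-hand side
has derivative `t/(eᵗ - 1) - 2t/(e^{2t} - 1) = t/(eᵗ + 1)`.
-/

lemma hasDerivAt_Li2 {z : ℝ} (hz : |z| < 1) :
    HasDerivAt Li2 (∑' n : ℕ, z ^ n / ((n : ℝ) + 1)) z := by
  obtain ⟨r, hzr, hr1⟩ := exists_between hz
  have hr0 : 0 < r := (abs_nonneg z).trans_lt hzr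
  refine hasDerivAt_tsum_of_isPreconnected (t := Metric.ball 0 r) (y₀ := 0)
      (g := fun (n : ℕ) (w : ℝ) => w ^ (n + 1) / ((n : ℝ) + 1) ^ 2)
      (g' := fun (n : ℕ) (w : ℝ) => w ^ n / ((n : ℝ) + 1))
      (summable_geometric_of_lt_one hr0.le hr1) Metric.isOpen_ball
      (convex_ball 0 r).isPreconnected (fun n y _ => ?_) (fun n y hy => ?_)
      (Metric.mem_ball_self hr0) (by simp) (by simpa using hzr)
  · refine ((hasDerivAt_pow (n + 1) y).div_const (((n : ℝ) + 1) ^ 2)).congr_deriv ?_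
    push_cast
    rw [pow_two, mul_div_mul_left _ _ n.cast_add_one_ne_zero]
  · have hn : (1 : ℝ) ≤ n + 1 := by linarith [n.cast_nonneg (α := ℝ)]
    rw [norm_div, norm_pow, Real.norm_of_nonneg (n.cast_add_one_pos (α := ℝ)).le]
    exact (div_le_self (by positivity) hn).trans
      (pow_le_pow_left₀ (norm_nonneg y) (mem_ball_zero_iff.1 hy).le n)

lemma tsum_pow_div_succ {z : ℝ} (hz : |z| < 1) (hz0 : z ≠ 0) :
    ∑' n : ℕ, z ^ n / ((n : ℝ) + 1) = -log (1 - z) / z := by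
  rw [← ((hasSum_pow_div_log_of_abs_lt_one hz).div_const z).tsum_eq]
  refine tsum_congr fun n => ?_
  field_simp
  ring

lemma continuousOn_Li2 : ContinuousOn Li2 (Ioo (-1) 1) := fun _ hz =>
  (hasDerivAt_Li2 (abs_lt.2 hz)).continuousAt.continuousWithinAt

lemma continuousOn_Li2_one_sub_exp {a : ℝ} (ha : 0 ≤ a) :
    ContinuousOn (fun s => Li2 (1 - exp (-a * s))) (Ici 0) := by
  refine continuousOn_Li2.comp (by fun_prop) fun s (hs : 0 ≤ s) => ⟨?_, ?_⟩
  · have : exp (-a * s) ≤ 1 := exp_le_one_iff.2 (by nlinarith)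
    linarith
  · linarith [exp_pos (-a * s)]

lemma hasDerivAt_Li2_one_sub_exp {a t : ℝ} (ht : 0 < a * t) :
    HasDerivAt (fun s => Li2 (1 - exp (-a * s))) (a ^ 2 * t / (exp (a * t) - 1)) t := by
  have hlt : exp (-a * t) < 1 := exp_lt_one_iff.2 (by linarith [neg_mul a t])
  have hpos := exp_pos (-a * t)
  have hz : |1 - exp (-a * t)| < 1 := abs_lt.2 ⟨by linarith, by linarith⟩
  have hinner : HasDerivAt (fun s => 1 - exp (-a * s)) (a * exp (-a * t)) t := by
    refine (((hasDerivAt_id t).const_mul (-a)).exp.const_sub 1).congr_deriv ?_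
    simp only [id, neg_mul]
    ring
  refine ((hasDerivAt_Li2 hz).comp t hinner).congr_deriv ?_
  rw [tsum_pow_div_succ hz (by linarith), sub_sub_cancel, log_exp, neg_mul, exp_neg]
  have h1 : exp (a * t) - 1 ≠ 0 := sub_ne_zero.2 (by rw [Ne, exp_eq_one_iff]; exact ht.ne')
  have h2 : 1 - (exp (a * t))⁻¹ ≠ 0 := by
    rw [neg_mul, exp_neg] at hlt
    linarith
  field_simp

lemma div_exp_sub_one_sub_two_mul_div {t : ℝ} (ht : t ≠ 0) :
    t / (exp t - 1) - 2 * t / (exp (2 * t) - 1) = t / (1 + exp t) := by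
  have h1 : exp t - 1 ≠ 0 := sub_ne_zero.2 (by rwa [Ne, exp_eq_one_iff])
  have h2 : 1 + exp t ≠ 0 := by linarith [exp_pos t]
  rw [show exp (2 * t) - 1 = (exp t - 1) * (1 + exp t) by rw [two_mul, exp_add]; ring]
  field_simp
  ring

theorem integral_eq_dilog (x : ℝ) (hx : 0 < x) :
    ∫ u in (0:ℝ)..x, u / (1 + Real.exp u) =
      Li2 (1 - Real.exp (-x)) - (1 / 2) * Li2 (1 - Real.exp (-2 * x)) := by
  set F : ℝ → ℝ := fun s => Li2 (1 - exp (-1 * s)) - 1 / 2 * Li2 (1 - exp (-2 * s))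
  have hderiv : ∀ t ∈ Ioo 0 x, HasDerivAt F (t / (1 + exp t)) t := fun t ht => by
    have h1 := hasDerivAt_Li2_one_sub_exp (a := 1) (t := t) (by linarith [ht.1])
    have h2 := hasDerivAt_Li2_one_sub_exp (a := 2) (t := t) (by linarith [ht.1])
    refine (h1.sub (h2.const_mul (1 / 2))).congr_deriv ?_
    rw [← div_exp_sub_one_sub_two_mul_div ht.1.ne', one_mul]
    ring
  have hcont : ContinuousOn F (Icc 0 x) :=
    ((continuousOn_Li2_one_sub_exp zero_le_one).sub
      ((continuousOn_Li2_one_sub_exp zero_le_two).const_mul _)).mono Icc_subset_Ici_self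
  have hint : IntervalIntegrable (fun u => u / (1 + exp u)) MeasureTheory.volume 0 x :=
    (continuous_id.div (by fun_prop) fun u => by positivity).intervalIntegrable 0 x
  rw [intervalIntegral.integral_eq_sub_of_hasDerivAt_of_le hx.le hcont hderiv hint]
  simp [F, Li2]
end

section
/- Let t > √2, t ≠ 2, and let β(t) satisfy β² = ∫₀^(βt) u/(1+e^u) du. Then β is differentiable and β'(t) = βt / (2(1+e^(βt)) − t²), which is strictly positive. -/
/-!
Substituting `v = b u` turns `∫₀ˢ u / (1 + e^{bu}) du = 1` into `G (b s) = b²`, where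
`G x = ∫₀ˣ v / (1 + eᵛ) dv` is `fermiIntegral`; since the left side is strictly decreasing in `b`,
`β s` is its only solution. Near `(β t, t)` the curve `G (b s) = b²` is the graph of
`s = G⁻¹(b²) / b`, whose derivative `(2 (1 + e^{bt}) - t²) / (b t)` is nonzero, so `β` is the
local inverse of this graph. The derivative is positive because at `x = β t * t` its sign is that
of `x (G x - x² / (2 (1 + eˣ)))`, and `G x - x² / (2 (1 + eˣ)) = ∫₀ˣ v ((1 + eᵛ)⁻¹ - (1 + eˣ)⁻¹) dv`
has the sign of `x`.
-/

open Real Set Filter Topology intervalIntegral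

noncomputable def fermiIntegral (x : ℝ) : ℝ := ∫ v in (0:ℝ)..x, v / (1 + exp v)

lemma continuous_div_one_add_exp_mul (b : ℝ) : Continuous fun u : ℝ => u / (1 + exp (b * u)) := by
  fun_prop (disch := intro; positivity)

lemma continuous_div_one_add_exp : Continuous fun v : ℝ => v / (1 + exp v) := by
  simpa using continuous_div_one_add_exp_mul 1

lemma hasStrictDerivAt_fermiIntegral (x : ℝ) :
    HasStrictDerivAt fermiIntegral (x / (1 + exp x)) x := by
  have hc := continuous_div_one_add_exp
  exact integral_hasStrictDerivAt_right (hc.intervalIntegrable _ _)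
    (hc.stronglyMeasurableAtFilter _ _) hc.continuousAt

lemma integral_div_one_add_exp_mul {b : ℝ} (hb : b ≠ 0) (s : ℝ) :
    ∫ u in (0:ℝ)..s, u / (1 + exp (b * u)) = fermiIntegral (b * s) / b ^ 2 := by
  have h := integral_comp_mul_left (fun v => v / (1 + exp v)) hb (a := 0) (b := s)
  rw [mul_zero, smul_eq_mul] at h
  calc ∫ u in (0:ℝ)..s, u / (1 + exp (b * u))
      = b⁻¹ * ∫ u in (0:ℝ)..s, b * u / (1 + exp (b * u)) := by
        rw [← integral_const_mul]
        refine integral_congr fun u _ => ?_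
        field_simp
    _ = fermiIntegral (b * s) / b ^ 2 := by
        rw [h, fermiIntegral]
        ring

lemma integral_div_one_add_exp_zero_mul (s : ℝ) :
    ∫ u in (0:ℝ)..s, u / (1 + exp (0 * u)) = s ^ 2 / 4 := by
  norm_num [integral_div, integral_id]
  ring

lemma strictAnti_integral_div_one_add_exp_mul {s : ℝ} (hs : 0 < s) :
    StrictAnti fun b : ℝ => ∫ u in (0:ℝ)..s, u / (1 + exp (b * u)) := by
  intro b₁ b₂ hb
  refine integral_lt_integral_of_continuousOn_of_le_of_exists_lt hs
    (continuous_div_one_add_exp_mul b₂).continuousOn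
    (continuous_div_one_add_exp_mul b₁).continuousOn (fun u hu => ?_)
    ⟨s, right_mem_Icc.2 hs.le, ?_⟩
  · have : exp (b₁ * u) ≤ exp (b₂ * u) := exp_le_exp.2 (by nlinarith [hu.1])
    gcongr
    exact hu.1.le
  · have : exp (b₁ * s) < exp (b₂ * s) := exp_lt_exp.2 (by nlinarith)
    gcongr

lemma mul_integral_pos_of_pos_on {f : ℝ → ℝ} {a b : ℝ}
    (hf : IntervalIntegrable f MeasureTheory.volume a b)
    (hpos : ∀ x ∈ uIoo a b, 0 < f x) (hab : a ≠ b) : 0 < (b - a) * ∫ x in a..b, f x := by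
  rcases hab.lt_or_gt with h | h
  · exact mul_pos (sub_pos.2 h)
      (intervalIntegral_pos_of_pos_on hf (fun x hx => hpos x (Ioo_subset_uIoo hx)) h)
  · rw [integral_symm]
    exact mul_pos_of_neg_of_neg (sub_neg.2 h) <| neg_neg_of_pos <|
      intervalIntegral_pos_of_pos_on hf.symm (fun x hx => hpos x (Ioo_subset_uIoo' hx)) h

lemma mul_fermiIntegral_sub_pos {x : ℝ} (hx : x ≠ 0) :
    0 < x * (fermiIntegral x - x ^ 2 / (2 * (1 + exp x))) := by
  have hc := continuous_div_one_add_exp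
  have hc' : Continuous fun v : ℝ => v / (1 + exp x) := by fun_prop
  have heq : fermiIntegral x - x ^ 2 / (2 * (1 + exp x))
      = ∫ v in (0:ℝ)..x, (v / (1 + exp v) - v / (1 + exp x)) := by
    rw [integral_sub (hc.intervalIntegrable 0 x) (hc'.intervalIntegrable 0 x), integral_div,
      integral_id, fermiIntegral]
    field_simp
    ring
  have hpos : ∀ v ∈ uIoo 0 x, 0 < v / (1 + exp v) - v / (1 + exp x) := by
    intro v hv
    have hsign : 0 < v * (exp x - exp v) := by
      rcases hx.lt_or_gt with hx | hx
      · rw [uIoo_of_gt hx] at hv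
        exact mul_pos_of_neg_of_neg hv.2 (sub_neg.2 (exp_lt_exp.2 hv.1))
      · rw [uIoo_of_lt hx] at hv
        exact mul_pos hv.1 (sub_pos.2 (exp_lt_exp.2 hv.2))
    have hdiff : v / (1 + exp v) - v / (1 + exp x)
        = v * (exp x - exp v) / ((1 + exp v) * (1 + exp x)) := by
      field_simp
      ring
    rw [hdiff]
    positivity
  simpa [heq] using
    mul_integral_pos_of_pos_on ((hc.sub hc').intervalIntegrable 0 x) hpos hx.symm

lemma div_two_mul_one_add_exp_sub_sq_pos {b t : ℝ} (hb : b ≠ 0) (ht : t ≠ 0)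
    (h : fermiIntegral (b * t) = b ^ 2) :
    0 < b * t / (2 * (1 + exp (b * t)) - t ^ 2) := by
  have key := mul_fermiIntegral_sub_pos (mul_ne_zero hb ht)
  have hD : fermiIntegral (b * t) - (b * t) ^ 2 / (2 * (1 + exp (b * t)))
      = (2 * (1 + exp (b * t)) - t ^ 2) * (b ^ 2 / (2 * (1 + exp (b * t)))) := by
    rw [h]; field_simp
  rw [hD, ← mul_assoc] at key
  exact div_pos_iff.2 (mul_pos_iff.1 (pos_of_mul_pos_left key (by positivity)))

lemma exists_hasStrictDerivAt_fermiIntegral_mul_eq_sq {b₀ t : ℝ} (hb₀ : b₀ ≠ 0) (ht : t ≠ 0)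
    (h : fermiIntegral (b₀ * t) = b₀ ^ 2) :
    ∃ φ : ℝ → ℝ, HasStrictDerivAt φ ((2 * (1 + exp (b₀ * t)) - t ^ 2) / (b₀ * t)) b₀ ∧
      φ b₀ = t ∧ ∀ᶠ b in 𝓝 b₀, fermiIntegral (b * φ b) = b ^ 2 := by
  set x := b₀ * t
  have hG := hasStrictDerivAt_fermiIntegral x
  have hG' : x / (1 + exp x) ≠ 0 := div_ne_zero (mul_ne_zero hb₀ ht) (by positivity)
  set g := hG.localInverse fermiIntegral _ x hG'
  have hgx : g (b₀ ^ 2) = x := h ▸ (hG.eventually_left_inverse hG').self_of_nhds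
  have hsq : HasStrictDerivAt (fun b : ℝ => b ^ 2) (2 * b₀) b₀ := by
    simpa using hasStrictDerivAt_pow 2 b₀
  have hg : HasStrictDerivAt (fun b => g (b ^ 2)) ((x / (1 + exp x))⁻¹ * (2 * b₀)) b₀ :=
    (hG.to_localInverse hG').comp_of_eq b₀ hsq h
  refine ⟨fun b => g (b ^ 2) / b, ?_, ?_, ?_⟩
  · refine (hg.div (hasStrictDerivAt_id b₀) hb₀).congr_deriv ?_
    rw [hgx, id]
    field_simp
    ring
  · simp only [hgx, x]
    field_simp
  · have hsq_tendsto : Tendsto (· ^ 2) (𝓝 b₀) (𝓝 (fermiIntegral x)) :=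
      h ▸ (continuous_pow 2).continuousAt.tendsto
    filter_upwards [hsq_tendsto.eventually (hG.eventually_right_inverse hG'),
      eventually_ne_nhds hb₀] with b hb hb0
    rwa [mul_div_cancel₀ _ hb0]

theorem beta_hasDerivAt (β : ℝ → ℝ)
    (hβ : ∀ s : ℝ, s > Real.sqrt 2 →
      1 = ∫ u in (0:ℝ)..s, u / (1 + Real.exp (β s * u)))
    (t : ℝ) (ht : t > Real.sqrt 2) (ht2 : t ≠ 2) :
    HasDerivAt β (β t * t / (2 * (1 + Real.exp (β t * t)) - t ^ 2)) t ∧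
      0 < β t * t / (2 * (1 + Real.exp (β t * t)) - t ^ 2) := by
  have ht0 : 0 < t := (sqrt_nonneg 2).trans_lt ht
  have hβt : β t ≠ 0 := by
    intro h0
    have h1 := hβ t ht
    rw [h0, integral_div_one_add_exp_zero_mul] at h1
    exact ht2 ((pow_left_inj₀ ht0.le zero_le_two two_ne_zero).1 (by linarith))
  have hG : fermiIntegral (β t * t) = β t ^ 2 := by
    have h1 := hβ t ht
    rw [integral_div_one_add_exp_mul hβt, eq_div_iff (pow_ne_zero 2 hβt), one_mul] at h1
    exact h1.symm
  obtain ⟨φ, hφ, hφt, hlevel⟩ := exists_hasStrictDerivAt_fermiIntegral_mul_eq_sq hβt ht0.ne' hG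
  have hleft : ∀ᶠ b in 𝓝 (β t), β (φ b) = b := by
    have hφ_gt : ∀ᶠ b in 𝓝 (β t), √2 < φ b :=
      hφ.hasDerivAt.continuousAt.eventually (by rw [hφt]; exact lt_mem_nhds ht)
    filter_upwards [hφ_gt, hlevel, eventually_ne_nhds hβt] with b hφb hb hb0
    refine (strictAnti_integral_div_one_add_exp_mul ((sqrt_nonneg 2).trans_lt hφb)).injective ?_
    rw [← hβ _ hφb, integral_div_one_add_exp_mul hb0, hb, div_self (pow_ne_zero 2 hb0)]
  have hpos := div_two_mul_one_add_exp_sub_sq_pos hβt ht0.ne' hG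
  have hβ' := hφ.to_local_left_inverse (by rw [← inv_div]; exact (inv_pos.2 hpos).ne') hleft
  rw [hφt, inv_div] at hβ'
  exact ⟨hβ'.hasDerivAt, hpos⟩
end

section
/- There exists a constant c > 0 such that for all x ∈ (0,1) and all s ∈ ℝ, |log((1+e^{is}x)/(1+x)) − is·x/(1+x) + (s²/2)·x/(1+x)²| ≤ c·x|s|³/(1−x)³, where log denotes the principal branch. -/
/-!
With `w(t) = 1 + x e^{it}` and `F(t) = log (w(t) / (1 + x))` we have `F(0) = 0`,
`F' = i - i / w`, `F'' = -(w - 1) / w²` and `F''' = i (w - 1)(w - 2) / w³`, so the expression is the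
remainder of the second-order Taylor expansion of `F` at `0`. Since `|w - 1| = x`, `|w - 2| ≤ 2` and
`|w| ≥ 1 - x`, the third derivative is bounded by `2x / (1 - x)³`, and the mean value inequality
applied three times bounds the remainder by `2x|s|³ / (1 - x)³`.
-/

open Complex

section Taylor

variable {E : Type*} [NormedAddCommGroup E] [NormedSpace ℝ E]

theorem norm_sub_le_mul_abs_pow_succ_of_norm_deriv_le {f f' : ℝ → E} {C : ℝ} {n : ℕ}
    (hf : ∀ t, HasDerivAt f (f' t) t) (hf' : ∀ t, ‖f' t‖ ≤ C * |t| ^ n) (s : ℝ) :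
    ‖f s - f 0‖ ≤ C * |s| ^ (n + 1) := by
  have hC : 0 ≤ C := by simpa using (norm_nonneg _).trans (hf' 1)
  have hbound : ∀ t ∈ Set.uIcc 0 s, ‖f' t‖ ≤ C * |s| ^ n := fun t ht =>
    (hf' t).trans <| mul_le_mul_of_nonneg_left
      (pow_le_pow_left₀ (abs_nonneg t) (by simpa using Set.abs_sub_left_of_mem_uIcc ht) n) hC
  calc ‖f s - f 0‖ ≤ C * |s| ^ n * ‖s - 0‖ :=
        (convex_uIcc 0 s).norm_image_sub_le_of_norm_hasDerivWithin_le
          (fun t _ => (hf t).hasDerivWithinAt) hbound Set.left_mem_uIcc Set.right_mem_uIcc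
    _ = C * |s| ^ (n + 1) := by rw [sub_zero, Real.norm_eq_abs]; ring

theorem norm_sub_taylor_two_le {f₀ f₁ f₂ f₃ : ℝ → E} {C : ℝ}
    (h₀ : ∀ t, HasDerivAt f₀ (f₁ t) t) (h₁ : ∀ t, HasDerivAt f₁ (f₂ t) t)
    (h₂ : ∀ t, HasDerivAt f₂ (f₃ t) t) (h₃ : ∀ t, ‖f₃ t‖ ≤ C) (s : ℝ) :
    ‖f₀ s - f₀ 0 - s • f₁ 0 - (s ^ 2 / 2) • f₂ 0‖ ≤ C * |s| ^ 3 := by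
  have e₂ : ∀ t, ‖f₂ t - f₂ 0‖ ≤ C * |t| ^ 1 :=
    norm_sub_le_mul_abs_pow_succ_of_norm_deriv_le h₂ (by simpa using h₃)
  have e₁ : ∀ t, ‖f₁ t - f₁ 0 - t • f₂ 0‖ ≤ C * |t| ^ 2 := fun t => by
    convert norm_sub_le_mul_abs_pow_succ_of_norm_deriv_le
      (f := fun t => f₁ t - t • f₂ 0)
      (fun t => ((h₁ t).sub ((hasDerivAt_id' t).smul_const (f₂ 0))).congr_deriv (by rw [one_smul]))
      e₂ t using 2
    simp only [zero_smul, sub_zero]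
    abel
  have hsq : ∀ t : ℝ, HasDerivAt (fun t : ℝ => (t ^ 2 / 2) • f₂ 0) (t • f₂ 0) t := fun t => by
    convert ((hasDerivAt_pow 2 t).div_const 2).smul_const (f₂ 0) using 2
    ring
  convert norm_sub_le_mul_abs_pow_succ_of_norm_deriv_le
    (f := fun t => f₀ t - t • f₁ 0 - (t ^ 2 / 2) • f₂ 0)
    (fun t => (((h₀ t).sub ((hasDerivAt_id' t).smul_const (f₁ 0))).sub (hsq t)).congr_deriv
      (by rw [one_smul])) e₁ s using 2
  simp only [zero_smul, sub_zero, ne_eq, OfNat.ofNat_ne_zero, not_false_eq_true, zero_pow, zero_div]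
  abel

end Taylor

namespace FxBound

noncomputable def w (a : ℂ) (t : ℝ) : ℂ := 1 + exp (t * I) * a

variable {a : ℂ}

lemma w_zero : w a 0 = 1 + a := by simp [w]

lemma norm_w_sub_one (t : ℝ) : ‖w a t - 1‖ = ‖a‖ := by
  simp [w, norm_exp_ofReal_mul_I]

lemma one_sub_norm_le_norm_w (t : ℝ) : 1 - ‖a‖ ≤ ‖w a t‖ := by
  simpa [w, norm_exp_ofReal_mul_I] using norm_sub_norm_le (1 : ℂ) (-(exp (t * I) * a))

lemma w_ne_zero (ha : ‖a‖ < 1) (t : ℝ) : w a t ≠ 0 :=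
  norm_pos_iff.1 <| (sub_pos.2 ha).trans_le (one_sub_norm_le_norm_w t)

lemma w_div_mem_slitPlane {x : ℝ} (hx : |x| < 1) (t : ℝ) : w x t / (1 + x) ∈ slitPlane := by
  have hre : 0 < (w x t).re := by
    have := (abs_re_le_norm (exp (t * I) * x)).trans_lt (by simpa [norm_exp_ofReal_mul_I] using hx)
    simp only [w, add_re, one_re]
    linarith [neg_abs_le (exp (t * I) * x).re]
  have h1x : (1 + x : ℂ) = ((1 + x : ℝ) : ℂ) := by push_cast; rfl
  rw [h1x]
  exact Or.inl (by rw [div_ofReal_re]; exact div_pos hre (by linarith [neg_abs_le x]))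

lemma hasDerivAt_w (t : ℝ) : HasDerivAt (w a) (I * (w a t - 1)) t := by
  refine ((((hasDerivAt_id' t).ofReal_comp.mul_const I).cexp.mul_const a).const_add 1).congr_deriv ?_
  simp only [w]
  push_cast
  ring

lemma hasDerivAt_log_w_div {c : ℂ} {t : ℝ} (h : w a t / c ∈ slitPlane) :
    HasDerivAt (fun t => log (w a t / c)) (I - I / w a t) t := by
  have hc : c ≠ 0 := by rintro rfl; simp at h
  have hw : w a t ≠ 0 := by rintro h0; simp [h0] at h
  refine ((hasDerivAt_log h).comp t ((hasDerivAt_w t).div_const c)).congr_deriv ?_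
  field_simp

lemma hasDerivAt_I_sub_I_div_w (ha : ‖a‖ < 1) (t : ℝ) :
    HasDerivAt (fun t => I - I / w a t) (-(w a t - 1) / w a t ^ 2) t := by
  have hw := w_ne_zero ha t
  refine (((hasDerivAt_const t I).div (hasDerivAt_w t) hw).const_sub I).congr_deriv ?_
  field_simp
  ring_nf
  rw [I_sq]
  ring

lemma hasDerivAt_neg_w_sub_one_div_sq (ha : ‖a‖ < 1) (t : ℝ) :
    HasDerivAt (fun t => -(w a t - 1) / w a t ^ 2)
      (I * (w a t - 1) * (w a t - 2) / w a t ^ 3) t := by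
  have hw := w_ne_zero ha t
  refine (((hasDerivAt_w t).sub_const 1).neg.div ((hasDerivAt_w t).pow 2)
    (pow_ne_zero 2 hw)).congr_deriv ?_
  simp only [Pi.pow_apply, Pi.neg_apply]
  field_simp
  ring

lemma norm_third_deriv_le (ha : ‖a‖ < 1) (t : ℝ) :
    ‖I * (w a t - 1) * (w a t - 2) / w a t ^ 3‖ ≤ 2 * ‖a‖ / (1 - ‖a‖) ^ 3 := by
  have h1a : 0 < 1 - ‖a‖ := sub_pos.2 ha
  have hw := one_sub_norm_le_norm_w (a := a) t
  have hw2 : ‖w a t - 2‖ ≤ 2 := by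
    calc ‖w a t - 2‖ = ‖(w a t - 1) - 1‖ := by ring_nf
      _ ≤ ‖w a t - 1‖ + ‖(1 : ℂ)‖ := norm_sub_le _ _
      _ ≤ 2 := by rw [norm_w_sub_one, norm_one]; linarith
  rw [norm_div, norm_mul, norm_mul, norm_I, one_mul, norm_w_sub_one, norm_pow, mul_comm]
  gcongr

end FxBound

open FxBound in
theorem f_x_bound :
    ∃ c : ℝ, 0 < c ∧ ∀ x : ℝ, x ∈ Set.Ioo (0:ℝ) 1 → ∀ s : ℝ,
      ‖(Complex.log ((1 + Complex.exp (s * Complex.I) * x) / (1 + x))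
          - s * Complex.I * (x / (1 + x)) + (s ^ 2 / 2) * (x / (1 + x) ^ 2))‖
        ≤ c * x * |s| ^ 3 / (1 - x) ^ 3 := by
  refine ⟨2, two_pos, fun x ⟨hx₀, hx₁⟩ s => ?_⟩
  have hnorm : ‖(x : ℂ)‖ = x := by simp [abs_of_pos hx₀]
  have ha : ‖(x : ℂ)‖ < 1 := by rwa [hnorm]
  have h1x : (1 + x : ℂ) ≠ 0 := by exact_mod_cast (by linarith : (1 + x : ℝ) ≠ 0)
  have key := norm_sub_taylor_two_le
    (fun t => hasDerivAt_log_w_div (w_div_mem_slitPlane (abs_lt.2 ⟨by linarith, hx₁⟩) t))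
    (hasDerivAt_I_sub_I_div_w ha) (hasDerivAt_neg_w_sub_one_div_sq ha)
    (norm_third_deriv_le ha) s
  rw [hnorm, w_zero, div_self h1x, log_one] at key
  calc _ = _ := by
        congr 1
        simp only [w, real_smul]
        push_cast
        field_simp
        ring
    _ ≤ 2 * x / (1 - x) ^ 3 * |s| ^ 3 := key
    _ = 2 * x * |s| ^ 3 / (1 - x) ^ 3 := by ring
end

section
/- For |s| ≤ (1−x)/2 with 0 < x < 1, the following series identity holds: log((1+xe^{is})/(1+x)) = −Σ_{k≥1} (is)^k/k! · Σ_{j≥1} (−x)^j j^{k−1}, and the double series converges absolutely. -/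
open Complex

/-!
Write `w = x e^{is}`. The logarithmic series gives
`log (1 + x) - log (1 + w) = ∑_{j ≥ 1} (-x)^j (e^{isj} - 1) / j`, and expanding each `e^{isj} - 1`
as an exponential series yields the double series. Its absolute values sum to
`∑_j x^j (e^{j|s|} - 1) / j ≤ ∑_j (x e^{|s|})^j`, which is finite because `|s| ≤ (1 - x)/2 < -log x`;
so the two summations may be interchanged.
-/

theorem NormedSpace.hasSum_pow_succ_div_factorial_succ {𝔸 : Type*} [NormedDivisionRing 𝔸]
    [NormedAlgebra ℚ 𝔸] [CompleteSpace 𝔸] (u : 𝔸) :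
    HasSum (fun k : ℕ => u ^ (k + 1) / (Nat.factorial (k + 1) : 𝔸)) (NormedSpace.exp u - 1) := by
  simpa using (hasSum_nat_add_iff' 1).2 (NormedSpace.expSeries_div_hasSum_exp u)

section ExpLogTerm

variable {𝕜 : Type*} [RCLike 𝕜]

/-- Both indices are shifted down by one from the natural `t^k/k! · z^j j^(k-1)`, `k, j ≥ 1`. -/
noncomputable def expLogTerm (z t : 𝕜) (p : ℕ × ℕ) : 𝕜 :=
  t ^ (p.1 + 1) / (Nat.factorial (p.1 + 1) : 𝕜) * (z ^ (p.2 + 1) * ((p.2 : 𝕜) + 1) ^ p.1)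

theorem hasSum_expLogTerm_fst (z t : 𝕜) (j : ℕ) :
    HasSum (fun k => expLogTerm z t (k, j))
      (z ^ (j + 1) / ((j : 𝕜) + 1) * (NormedSpace.exp (t * ((j : 𝕜) + 1)) - 1)) := by
  refine ((NormedSpace.hasSum_pow_succ_div_factorial_succ (t * ((j : 𝕜) + 1))).mul_left
    (z ^ (j + 1) / ((j : 𝕜) + 1))).congr_fun fun k => ?_
  have hj : (j : 𝕜) + 1 ≠ 0 := by exact_mod_cast j.succ_ne_zero
  simp only [expLogTerm, mul_pow]
  field_simp
  ring

theorem norm_expLogTerm (z t : 𝕜) (p : ℕ × ℕ) :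
    ‖expLogTerm z t p‖ = expLogTerm ‖z‖ ‖t‖ p := by
  have hj : ‖(p.2 : 𝕜) + 1‖ = (p.2 : ℝ) + 1 := by
    exact_mod_cast RCLike.norm_natCast (K := 𝕜) (p.2 + 1)
  simp [expLogTerm, hj]

theorem summable_expLogTerm_of_nonneg {r a : ℝ} (hr : 0 ≤ r) (ha : 0 ≤ a)
    (h : r * Real.exp a < 1) : Summable (expLogTerm r a) := by
  have hinner (j : ℕ) := hasSum_expLogTerm_fst r a j
  rw [← Real.exp_eq_exp_ℝ] at hinner
  have hbound (j : ℕ) : r ^ (j + 1) / ((j : ℝ) + 1) * (Real.exp (a * ((j : ℝ) + 1)) - 1) ≤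
      (r * Real.exp a) ^ (j + 1) := by
    have hexp : Real.exp (a * ((j : ℝ) + 1)) = Real.exp a ^ (j + 1) := by
      rw [← Real.exp_nat_mul]; push_cast; ring_nf
    have hj : (1 : ℝ) ≤ j + 1 := by linarith [j.cast_nonneg (α := ℝ)]
    calc r ^ (j + 1) / ((j : ℝ) + 1) * (Real.exp (a * ((j : ℝ) + 1)) - 1)
        ≤ r ^ (j + 1) * Real.exp (a * ((j : ℝ) + 1)) :=
          mul_le_mul (div_le_self (by positivity) hj) (by linarith)
            (by linarith [Real.one_le_exp (by positivity : 0 ≤ a * ((j : ℝ) + 1))]) (by positivity)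
      _ = (r * Real.exp a) ^ (j + 1) := by rw [hexp, mul_pow]
  have hnonneg : 0 ≤ expLogTerm r a := fun p => by unfold expLogTerm; positivity
  refine (Equiv.prodComm ℕ ℕ).summable_iff.1
    ((summable_prod_of_nonneg (f := fun p => expLogTerm r a p.swap) fun p => hnonneg p.swap).2
      ⟨fun j => (hinner j).summable, ?_⟩)
  refine Summable.of_nonneg_of_le (fun j => tsum_nonneg fun k => hnonneg _) (fun j => ?_)
    ((summable_nat_add_iff 1).2 (summable_geometric_of_lt_one (by positivity) h))
  simpa [(hinner j).tsum_eq] using hbound j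

theorem summable_norm_expLogTerm {z t : 𝕜} (h : ‖z‖ * Real.exp ‖t‖ < 1) :
    Summable fun p => ‖expLogTerm z t p‖ := by
  simpa only [norm_expLogTerm] using
    summable_expLogTerm_of_nonneg (norm_nonneg z) (norm_nonneg t) h

end ExpLogTerm

theorem Complex.log_sub_log_eq_tsum_tsum {z t : ℂ} (h : ‖z‖ * Real.exp ‖t‖ < 1) :
    log (1 - z) - log (1 - z * exp t) =
      ∑' k : ℕ, t ^ (k + 1) / (Nat.factorial (k + 1) : ℂ) *
        ∑' j : ℕ, z ^ (j + 1) * ((j : ℂ) + 1) ^ k := by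
  have hexp : 1 ≤ Real.exp ‖t‖ := Real.one_le_exp (norm_nonneg t)
  have hz : ‖z‖ < 1 := by nlinarith [norm_nonneg z]
  have hzt : ‖z * exp t‖ < 1 := by
    rw [norm_mul, norm_exp]
    exact lt_of_le_of_lt (by gcongr; exact re_le_norm t) h
  have hinner (j : ℕ) : ∑' k, expLogTerm z t (k, j) =
      (z * exp t) ^ (j + 1) / (j + 1) - z ^ (j + 1) / (j + 1) := by
    rw [(hasSum_expLogTerm_fst z t j).tsum_eq, ← exp_eq_exp_ℂ, mul_pow, ← exp_nat_mul]
    push_cast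
    ring_nf
  calc log (1 - z) - log (1 - z * exp t)
      = ∑' j : ℕ, ∑' k : ℕ, expLogTerm z t (k, j) := by
        rw [tsum_congr hinner, ((hasSum_taylorSeries_neg_log' hzt).sub
          (hasSum_taylorSeries_neg_log' hz)).tsum_eq]
        ring
    _ = ∑' k : ℕ, ∑' j : ℕ, expLogTerm z t (k, j) :=
        (summable_norm_expLogTerm h).of_norm.tsum_comm (f := fun k j => expLogTerm z t (k, j))
    _ = _ := tsum_congr fun k => by simp only [expLogTerm]; exact tsum_mul_left

theorem Complex.log_div_ofReal {r : ℝ} (hr : 0 < r) {z : ℂ} (hz : z ≠ 0) :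
    log (z / r) = log z - log r := by
  rw [div_eq_mul_inv, ← ofReal_inv, log_mul_ofReal _ (inv_pos.2 hr) _ hz, Real.log_inv,
    ofReal_neg, ofReal_log hr.le]
  ring

theorem Real.mul_exp_abs_lt_one {x s : ℝ} (hx0 : 0 < x) (hx1 : x < 1)
    (hs : |s| ≤ (1 - x) / 2) : x * Real.exp |s| < 1 :=
  calc x * Real.exp |s| < x * Real.exp (1 - x) := by gcongr; linarith
    _ ≤ Real.exp (x - 1) * Real.exp (1 - x) := by gcongr; linarith [Real.add_one_le_exp (x - 1)]
    _ = 1 := by rw [← Real.exp_add]; simp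

theorem log_series_identity (x s : ℝ) (hx0 : 0 < x) (hx1 : x < 1)
    (hs : |s| ≤ (1 - x) / 2) :
    Summable (fun p : ℕ × ℕ =>
      ‖(Complex.I * s) ^ (p.1 + 1) / (Nat.factorial (p.1 + 1) : ℂ) *
        ((-(x : ℂ)) ^ (p.2 + 1) * ((p.2 : ℂ) + 1) ^ p.1)‖) ∧
    Complex.log ((1 + (x : ℂ) * Complex.exp (Complex.I * s)) / (1 + x)) =
      -∑' k : ℕ, (Complex.I * s) ^ (k + 1) / (Nat.factorial (k + 1) : ℂ) *
        ∑' j : ℕ, (-(x : ℂ)) ^ (j + 1) * ((j : ℂ) + 1) ^ k := by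
  have h : ‖-(x : ℂ)‖ * Real.exp ‖I * s‖ < 1 := by
    simpa [abs_of_pos hx0] using Real.mul_exp_abs_lt_one hx0 hx1 hs
  have hw : 1 + (x : ℂ) * exp (I * s) ≠ 0 := by
    have hw1 : ‖(x : ℂ) * exp (I * s)‖ < 1 := by simpa [norm_exp, abs_of_pos hx0] using hx1
    intro h0
    rw [eq_neg_of_add_eq_zero_right h0] at hw1
    simp at hw1
  refine ⟨summable_norm_expLogTerm h, ?_⟩
  calc log ((1 + x * exp (I * s)) / (1 + x))
      = log (1 + x * exp (I * s)) - log (1 + x) := by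
        exact_mod_cast log_div_ofReal (r := 1 + x) (by linarith) hw
    _ = -(log (1 - -x) - log (1 - -x * exp (I * s))) := by ring_nf
    _ = _ := by rw [log_sub_log_eq_tsum_tsum h]
end

section
/- Let ε ∈ (0, 1/2] and let ‖α‖ denote the distance from α to the nearest integer. Then there exists a constant c > 0 (depending only on ε) such that for all positive integers n and all α with ε/n ≤ α ≤ 1/2, one has Σ_{k=1}^{n} ‖kα‖² ≥ c·n. -/
/-! Write `‖x‖ = |x - round x|`. If `nα ≤ 1/2`, then `‖kα‖ = kα` for all `k ≤ n` and the sum is at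
least `α²n³/3 ≥ ε²n/3`. Otherwise take `s = ⌈1/(4α)⌉`, so that `sα ∈ [1/4, 3/4]` and `‖sα‖ ≥ 1/4`.
Since `‖·‖` is subadditive, `‖kα‖ + ‖(k+s)α‖ ≥ ‖sα‖ ≥ 1/4` for every `k`, and pairing `k` with
`k + s` over the `n - s ≥ n/4` indices `k ≤ n - s` bounds the sum below by `n/256`. -/

open Finset

section Round

variable {α : Type*} [Ring α] [LinearOrder α] [IsStrictOrderedRing α] [FloorRing α]

theorem le_abs_sub_round_of_le_of_le {a x : α} (ha : a ≤ x) (hx : x ≤ 1 - a) :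
    a ≤ |x - round x| := by
  rcases le_or_gt (round x) 0 with h | h
  · have : x ≤ x - round x := (le_sub_self_iff x).2 (by exact_mod_cast h)
    exact ha.trans (this.trans (le_abs_self _))
  · have : (1 : α) - x ≤ -(x - round x) := by
      rw [neg_sub]; exact sub_le_sub_right (by exact_mod_cast h) x
    exact (le_sub_comm.1 hx).trans (this.trans (neg_le_abs _))

theorem abs_sub_round_sub_le (x y : α) :
    |(y - x) - round (y - x)| ≤ |x - round x| + |y - round y| :=
  calc |(y - x) - round (y - x)|
      ≤ |(y - x) - ↑(round y - round x)| := round_le _ _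
    _ = |(y - round y) - (x - round x)| := by push_cast; congr 1; abel
    _ ≤ |y - round y| + |x - round x| := abs_sub _ _
    _ = |x - round x| + |y - round y| := add_comm _ _

end Round

theorem cube_div_three_le_sum_Icc_sq (n : ℕ) : (n : ℝ) ^ 3 / 3 ≤ ∑ k ∈ Icc 1 n, (k : ℝ) ^ 2 := by
  induction n with
  | zero => simp
  | succ n ih =>
    rw [sum_Icc_succ_top (by omega)]
    push_cast
    nlinarith [Nat.cast_nonneg (α := ℝ) n]

theorem sum_Icc_add_shift_le {M : Type*} [AddCommMonoid M] [PartialOrder M]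
    [IsOrderedAddMonoid M] (f : ℕ → M) (hf : 0 ≤ f) (n s : ℕ) :
    ∑ k ∈ Icc 1 (n - s), (f k + f (k + s)) ≤ 2 • ∑ k ∈ Icc 1 n, f k := by
  have hshift : ∑ k ∈ Icc 1 (n - s), f (k + s) = ∑ k ∈ Icc (1 + s) (n - s + s), f k := by
    rw [← map_add_right_Icc, sum_map]; rfl
  rw [sum_add_distrib, hshift, two_nsmul]
  exact add_le_add
    (sum_le_sum_of_subset_of_nonneg (Icc_subset_Icc_right (n.sub_le s)) fun k _ _ => hf k)
    (sum_le_sum_of_subset_of_nonneg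
      (fun k hk => by simp only [mem_Icc] at hk ⊢; omega) fun k _ _ => hf k)

theorem sq_mul_cube_div_three_le_sum_sq_abs_sub_round {n : ℕ} {α : ℝ} (hα : 0 ≤ α)
    (hnα : n * α ≤ 1 / 2) :
    α ^ 2 * n ^ 3 / 3 ≤ ∑ k ∈ Icc 1 n, |k * α - round (k * α)| ^ 2 := by
  have hterm : ∀ k ∈ Icc 1 n, (k * α) ^ 2 ≤ |k * α - round (k * α)| ^ 2 := by
    intro k hk
    have hkn : (k : ℝ) ≤ n := by exact_mod_cast (mem_Icc.1 hk).2
    have hkα : k * α ≤ 1 - k * α := by nlinarith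
    exact pow_le_pow_left₀ (by positivity) (le_abs_sub_round_of_le_of_le le_rfl hkα) 2
  calc α ^ 2 * n ^ 3 / 3 ≤ α ^ 2 * ∑ k ∈ Icc 1 n, (k : ℝ) ^ 2 := by
        rw [mul_div_assoc]; gcongr; exact cube_div_three_le_sum_Icc_sq n
    _ = ∑ k ∈ Icc 1 n, (k * α) ^ 2 := by rw [mul_sum]; congr! 1 with k; ring
    _ ≤ _ := sum_le_sum hterm

theorem div_le_sum_sq_abs_sub_round {n : ℕ} {α : ℝ} (hα : α ≤ 1 / 2)
    (hnα : 1 / 2 < n * α) :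
    n / 256 ≤ ∑ k ∈ Icc 1 n, |k * α - round (k * α)| ^ 2 := by
  have hα0 : 0 < α := pos_of_mul_pos_right (by linarith) (Nat.cast_nonneg n)
  set s := ⌈1 / (4 * α)⌉₊
  have hs_ge : 1 / (4 * α) ≤ s := Nat.le_ceil _
  have hs_lt : (s : ℝ) < 1 / (4 * α) + 1 := Nat.ceil_lt_add_one (by positivity)
  have hsα_ge : 1 / 4 ≤ s * α := by
    calc 1 / 4 = 1 / (4 * α) * α := by field_simp
      _ ≤ s * α := by gcongr
  have hsα_le : s * α ≤ 1 - 1 / 4 := by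
    have : s * α < (1 / (4 * α) + 1) * α := by gcongr
    rw [add_mul, one_div_mul_eq_div, div_mul_cancel_right₀ hα0.ne'] at this
    linarith
  set g : ℕ → ℝ := fun k => |k * α - round (k * α)|
  have hpair : ∀ k, 1 / 32 ≤ g k ^ 2 + g (k + s) ^ 2 := by
    intro k
    have h := abs_sub_round_sub_le (k * α) ((k + s : ℕ) * α)
    rw [show ((k + s : ℕ) : ℝ) * α - k * α = s * α by push_cast; ring] at h
    have h14 : 1 / 4 ≤ g k + g (k + s) := (le_abs_sub_round_of_le_of_le hsα_ge hsα_le).trans h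
    calc (1 : ℝ) / 32 = (1 / 4) ^ 2 / 2 := by norm_num
      _ ≤ (g k + g (k + s)) ^ 2 / 2 := by gcongr
      _ ≤ g k ^ 2 + g (k + s) ^ 2 := by linarith [add_sq_le (a := g k) (b := g (k + s))]
  have hcount : ((n - s : ℕ) : ℝ) * (1 / 32) ≤ 2 * ∑ k ∈ Icc 1 n, g k ^ 2 := by
    have h := card_nsmul_le_sum (Icc 1 (n - s)) _ _ fun k _ => hpair k
    rw [Nat.card_Icc, Nat.add_sub_cancel, nsmul_eq_mul] at h
    exact h.trans (by simpa only [nsmul_eq_mul, Nat.cast_ofNat]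
      using sum_Icc_add_shift_le (g · ^ 2) (fun k => by positivity) n s)
  have hn : n ≤ 4 * (n - s) := by
    have h2s : 2 * s < n + 2 := by
      have : 1 / (4 * α) < n / 2 := by
        rw [div_lt_div_iff₀ (by positivity) two_pos]; linarith
      exact_mod_cast (by push_cast; linarith : ((2 * s : ℕ) : ℝ) < n + 2)
    have h1n : 1 < n := by
      exact_mod_cast (by nlinarith : (1 : ℝ) < n)
    omega
  have : (n : ℝ) ≤ 4 * (n - s : ℕ) := by exact_mod_cast hn
  linarith

theorem roth_szekeres_general (ε : ℝ) (hε0 : 0 < ε) :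
    ∃ c : ℝ, 0 < c ∧ ∀ n : ℕ, 0 < n → ∀ α : ℝ,
      ε / n ≤ α → α ≤ 1 / 2 →
      c * n ≤ ∑ k ∈ Finset.Icc 1 n, |(k : ℝ) * α - round ((k : ℝ) * α)| ^ 2 := by
  refine ⟨min (ε ^ 2 / 3) (1 / 256), lt_min (by have := hε0; positivity) (by norm_num),
    fun n hn α hεα hα => ?_⟩
  have hn' : (0 : ℝ) < n := by exact_mod_cast hn
  have hα0 : 0 < α := (div_pos hε0 hn').trans_le hεα
  have hεnα : ε ≤ n * α := by rwa [div_le_iff₀ hn', mul_comm] at hεα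
  rcases le_or_gt (n * α) (1 / 2) with hsmall | hlarge
  · calc min (ε ^ 2 / 3) (1 / 256) * (n : ℝ) ≤ ε ^ 2 / 3 * n := by gcongr; exact min_le_left _ _
      _ ≤ α ^ 2 * n ^ 3 / 3 := by nlinarith [mul_le_mul hεnα hεnα hε0.le (by linarith)]
      _ ≤ _ := sq_mul_cube_div_three_le_sum_sq_abs_sub_round hα0.le hsmall
  · calc min (ε ^ 2 / 3) (1 / 256) * (n : ℝ) ≤ n / 256 := by
          linarith [mul_le_mul_of_nonneg_right (min_le_right (ε ^ 2 / 3) (1 / 256)) hn'.le]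
      _ ≤ _ := div_le_sum_sq_abs_sub_round hα hlarge

theorem roth_szekeres (ε : ℝ) (hε0 : 0 < ε) (hε : ε ≤ 1 / 2) :
    ∃ c : ℝ, 0 < c ∧ ∀ n : ℕ, 0 < n → ∀ α : ℝ,
      ε / n ≤ α → α ≤ 1 / 2 →
      c * n ≤ ∑ k ∈ Finset.Icc 1 n, |(k : ℝ) * α - round ((k : ℝ) * α)| ^ 2 :=
  roth_szekeres_general ε hε0
end

section
/- Let a, b be coprime positive integers with 3 ≤ b ≤ n. Then Σ_{k=1}^{n} ‖k·a/b‖² ≥ n/96, where ‖·‖ is the distance to the nearest integer. -/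
open Real

/-!
Call a residue `j` modulo `b` *middle* if `b/4 ≤ j ≤ 3b/4`; then `‖m/b‖ ≥ 1/4` whenever
`m mod b` is middle, and for `b ≥ 2` at least a third of the residues are middle. Since `a` is
invertible modulo `b`, every nonzero residue is hit by `k a mod b` for at least `⌊n/b⌋` values
`k ≤ n`, so at least `(b/3)⌊n/b⌋ ≥ n/6` terms of the sum are `≥ 1/16`.
-/

open Finset

def middleResidues (b : ℕ) : Finset ℕ := {j ∈ range b | b ≤ 4 * j ∧ 4 * j ≤ 3 * b}

lemma le_three_mul_card_middleResidues {b : ℕ} (hb : 2 ≤ b) : b ≤ 3 * #(middleResidues b) := by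
  have : middleResidues b = Icc ((b + 3) / 4) (3 * b / 4) := by
    ext j
    simp only [middleResidues, mem_filter, mem_range, mem_Icc]
    omega
  rw [this, Nat.card_Icc]
  omega

lemma quarter_le_abs_sub_round_div_natCast {m b : ℕ} (hm : m % b ∈ middleResidues b) :
    (1 / 4 : ℝ) ≤ |(m : ℝ) / b - round ((m : ℝ) / b)| := by
  simp only [middleResidues, mem_filter, mem_range] at hm
  have hb : (0 : ℝ) < b := by exact_mod_cast (Nat.zero_le _).trans_lt hm.1
  have hmin : b ≤ 4 * min (m % b) (b - m % b) := by omega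
  rw [abs_sub_round_div_natCast_eq, le_div_iff₀ hb]
  have : (b : ℝ) ≤ 4 * (min (m % b) (b - m % b) : ℕ) := by exact_mod_cast hmin
  linarith

lemma div_le_card_filter_mul_mod_eq {a b : ℕ} (hcop : a.Coprime b) (n : ℕ) {j : ℕ}
    (hj₀ : 0 < j) (hj : j < b) : n / b ≤ #{k ∈ Icc 1 n | k * a % b = j} := by
  have hb : 0 < b := hj₀.trans hj
  obtain ⟨c, -, hc⟩ := Nat.exists_mul_mod_eq_of_coprime j hcop hb.ne'
  have hsolutions : ∀ k, k * a % b = j ↔ k ≡ c [MOD b] := fun k => by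
    rw [Nat.mod_eq_of_lt hj] at hc
    rw [← hc, mul_comm a c]
    exact ⟨Nat.ModEq.cancel_right_of_coprime hcop.symm, fun h => h.mul_right a⟩
  have hrange : {k ∈ range (n + 1) | k ≡ c [MOD b]} ⊆ {k ∈ Icc 1 n | k * a % b = j} := by
    intro k hk
    simp only [mem_filter, mem_range, mem_Icc, ← hsolutions] at hk ⊢
    rcases Nat.eq_zero_or_pos k with rfl | hk₀
    · simp only [zero_mul, Nat.zero_mod] at hk
      omega
    · omega
  calc n / b ≤ (n + 1) / b := Nat.div_le_div_right n.le_succ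
    _ ≤ (n + 1).count (· ≡ c [MOD b]) := by
      rw [Nat.count_modEq_card _ hb]
      exact Nat.le_add_right _ _
    _ ≤ #{k ∈ Icc 1 n | k * a % b = j} := by
      rw [Nat.count_eq_card_filter_range]
      exact card_le_card hrange

lemma card_mul_div_le_card_filter_mul_mod_mem {a b : ℕ} (hcop : a.Coprime b) (n : ℕ)
    {S : Finset ℕ} (hS : ∀ j ∈ S, 0 < j ∧ j < b) :
    #S * (n / b) ≤ #{k ∈ Icc 1 n | k * a % b ∈ S} := by
  set T := {k ∈ Icc 1 n | k * a % b ∈ S}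
  calc #S * (n / b) = ∑ _j ∈ S, n / b := by rw [sum_const, smul_eq_mul]
    _ ≤ ∑ j ∈ S, #{k ∈ T | k * a % b = j} := by
      refine sum_le_sum fun j hj => ?_
      refine (div_le_card_filter_mul_mod_eq hcop n (hS j hj).1 (hS j hj).2).trans
        (card_le_card fun k hk => ?_)
      simp only [T, mem_filter] at hk ⊢
      exact ⟨⟨hk.1, hk.2 ▸ hj⟩, hk.2⟩
    _ = #T := (card_eq_sum_card_fiberwise fun k hk => (mem_filter.mp hk).2).symm

lemma le_two_mul_mul_div {b n : ℕ} (hb : 0 < b) (hbn : b ≤ n) : n ≤ 2 * (b * (n / b)) := by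
  have hq : b ≤ b * (n / b) := Nat.le_mul_of_pos_right b (Nat.div_pos hbn hb)
  have := Nat.div_add_mod n b
  have := Nat.mod_lt n hb
  omega

theorem rational_case_bound_general (a b n : ℕ) (hcop : Nat.Coprime a b)
    (hb3 : 3 ≤ b) (hbn : b ≤ n) :
    (n : ℝ) / 96 ≤
      ∑ k ∈ Finset.Icc 1 n,
        |(k : ℝ) * a / b - round ((k : ℝ) * a / b)| ^ 2 := by
  set T := {k ∈ Icc 1 n | k * a % b ∈ middleResidues b}
  have hcard : n ≤ 6 * #T := by
    have hS : ∀ j ∈ middleResidues b, 0 < j ∧ j < b := fun j hj => by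
      simp only [middleResidues, mem_filter, mem_range] at hj
      omega
    have hT := card_mul_div_le_card_filter_mul_mod_mem hcop n hS
    have hM := le_three_mul_card_middleResidues (by omega : 2 ≤ b)
    calc n ≤ 2 * (b * (n / b)) := le_two_mul_mul_div (by omega) hbn
      _ ≤ 2 * (3 * #(middleResidues b) * (n / b)) := by gcongr
      _ ≤ 6 * #T := by linarith
  have hterm : ∀ k ∈ T, (1 / 16 : ℝ) ≤ |(k : ℝ) * a / b - round ((k : ℝ) * a / b)| ^ 2 := by
    intro k hk
    have h := quarter_le_abs_sub_round_div_natCast (mem_filter.mp hk).2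
    push_cast at h
    nlinarith
  calc (n : ℝ) / 96 ≤ #T • (1 / 16 : ℝ) := by
        rw [nsmul_eq_mul]
        have : (n : ℝ) ≤ 6 * #T := by exact_mod_cast hcard
        linarith
    _ ≤ ∑ k ∈ T, |(k : ℝ) * a / b - round ((k : ℝ) * a / b)| ^ 2 := card_nsmul_le_sum _ _ _ hterm
    _ ≤ _ := sum_le_sum_of_subset_of_nonneg (filter_subset _ _) fun _ _ _ => by positivity

theorem rational_case_bound (a b n : ℕ) (ha : 0 < a) (hcop : Nat.Coprime a b)
    (hb3 : 3 ≤ b) (hbn : b ≤ n) :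
    (n : ℝ) / 96 ≤
      ∑ k ∈ Finset.Icc 1 n,
        |(k : ℝ) * a / b - round ((k : ℝ) * a / b)| ^ 2 :=
  rational_case_bound_general a b n hcop hb3 hbn
end
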